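/- arXiv:1510.07949 — 7 statements merged into one kernel-verified Lean document; each statement's English description precedes it below -/
import Mathlib

section
/- Let s, p, l be the real sequences defined in the context. Then for every integer n ≥ 1, s(n)·l(n) = 3·p(n)^2. -/
theorem hanoi_stmt_0 (s p l : ℕ → ℝ)
    (hs1 : s 1 = 3) (hp1 : p 1 = 1) (hl1 : l 1 = 1)
    (hs : ∀ n, 1 ≤ n → s (n + 1) = 3 * s n ^ 3 + 6 * s n ^ 2 * p n)
    (hp : ∀ n, 1 ≤ n → p (n + 1) = s n ^ 3 + 7 * s n ^ 2 * p n + 7 * s n * p n ^ 2 + s n ^ 2 * l n)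
    (hl : ∀ n, 1 ≤ n → l (n + 1) = s n ^ 3 + 12 * s n ^ 2 * p n + 3 * s n ^ 2 * l n + 36 * s n * p n ^ 2 + 12 * s n * p n * l n + 14 * p n ^ 3) :
    ∀ n, 1 ≤ n → s n * l n = 3 * p n ^ 2 := by
  intro n hn
  induction n with
  | zero => omega
  | succ m ih =>
    rcases Nat.eq_or_lt_of_le hn with h | h
    · obtain rfl : m = 0 := by omega
      rw [show (0:ℕ)+1 = 1 from rfl, hs1, hp1, hl1]; norm_num
    · have hm : 1 ≤ m := by omega
      have ihm := ih hm
      rw [hs m hm, hp m hm, hl m hm]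
      linear_combination (3 * s m ^ 4 + 12 * s m ^ 3 * p m + 21 * s m ^ 2 * p m ^ 2 - 3 * s m ^ 3 * l m) * ihm
end

section
/- Let s, p, l be the real sequences defined in the context. Then for every integer n ≥ 1, 3^(n−1)·s(n+1) = 5^n·s(n)^3 (equivalently, s(n+1)/s(n)^3 = 5^n/3^(n−1)). -/
theorem hanoi_stmt_1 (s p l : ℕ → ℝ)
    (hs1 : s 1 = 3) (hp1 : p 1 = 1) (hl1 : l 1 = 1)
    (hs : ∀ n, 1 ≤ n → s (n + 1) = 3 * s n ^ 3 + 6 * s n ^ 2 * p n)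
    (hp : ∀ n, 1 ≤ n → p (n + 1) = s n ^ 3 + 7 * s n ^ 2 * p n + 7 * s n * p n ^ 2 + s n ^ 2 * l n)
    (hl : ∀ n, 1 ≤ n → l (n + 1) = s n ^ 3 + 12 * s n ^ 2 * p n + 3 * s n ^ 2 * l n + 36 * s n * p n ^ 2 + 12 * s n * p n * l n + 14 * p n ^ 3) :
    ∀ n, 1 ≤ n → (3 : ℝ) ^ (n - 1) * s (n + 1) = (5 : ℝ) ^ n * s n ^ 3 := by
  have key : ∀ n, 1 ≤ n → (3 : ℝ) ^ n * (s n + 2 * p n) = 5 ^ n * s n ∧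
      s n * l n = 3 * p n ^ 2 := by
    intro n hn
    induction n with
    | zero => omega
    | succ m ih =>
      rcases Nat.eq_or_lt_of_le hn with h1 | h1
      · have hm0 : m = 0 := by omega
        subst hm0
        rw [show (0:ℕ)+1 = 1 from rfl, hs1, hp1, hl1]; norm_num
      · have hm : 1 ≤ m := by omega
        obtain ⟨h1', h2'⟩ := ih hm
        constructor
        · have e : s (m+1) + 2 * p (m+1) = 5 * s m * (s m + 2 * p m)^2 := by
            rw [hs m hm, hp m hm]
            linear_combination 2 * s m * h2'
          rw [e]
          calc (3:ℝ)^(m+1) * (5 * s m * (s m + 2 * p m)^2)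
              = 15 * s m * (s m + 2 * p m) * ((3:ℝ)^m * (s m + 2 * p m)) := by ring
            _ = 15 * s m * (s m + 2 * p m) * (5^m * s m) := by rw [h1']
            _ = 5^(m+1) * (3 * s m ^ 3 + 6 * s m ^ 2 * p m) := by ring
            _ = 5^(m+1) * s (m+1) := by rw [hs m hm]
        · rw [hs m hm, hp m hm, hl m hm]
          linear_combination (-3 * s m ^ 3 * l m + 3 * s m ^ 4 + 12 * s m ^ 3 * p m
            + 21 * s m ^ 2 * p m ^ 2) * h2'
  intro n hn
  obtain ⟨h1, _⟩ := key n hn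
  have hpow : (3:ℝ)^(n-1) * 3 = 3 ^ n := by
    rw [← pow_succ]; congr 1; omega
  rw [hs n hn]
  calc (3:ℝ)^(n-1) * (3 * s n ^ 3 + 6 * s n ^ 2 * p n)
      = ((3:ℝ)^(n-1) * 3) * (s n ^ 2 * (s n + 2 * p n)) := by ring
    _ = 3^n * (s n + 2 * p n) * s n ^ 2 := by rw [hpow]; ring
    _ = 5^n * s n * s n ^ 2 := by rw [h1]
    _ = 5^n * s n ^ 3 := by ring
end

section
/- Let s, p, l be the real sequences defined in the context. Then for every integer n ≥ 1, s(n)^4 = 3^(3^n + 2n − 1) · 5^(3^n − 2n − 1); equivalently, s(n) = 3^((3^n + 2n − 1)/4) · 5^((3^n − 2n − 1)/4). -/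
lemma hanoi_aux_pow (n : ℕ) : 2 * n + 1 ≤ 3 ^ n := by
  induction n with
  | zero => simp
  | succ k ih =>
    have : 3 ^ (k + 1) = 3 * 3 ^ k := by ring
    omega

theorem hanoi_stmt_2 (s p l : ℕ → ℝ)
    (hs1 : s 1 = 3) (hp1 : p 1 = 1) (hl1 : l 1 = 1)
    (hs : ∀ n, 1 ≤ n → s (n + 1) = 3 * s n ^ 3 + 6 * s n ^ 2 * p n)
    (hp : ∀ n, 1 ≤ n → p (n + 1) = s n ^ 3 + 7 * s n ^ 2 * p n + 7 * s n * p n ^ 2 + s n ^ 2 * l n)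
    (hl : ∀ n, 1 ≤ n → l (n + 1) = s n ^ 3 + 12 * s n ^ 2 * p n + 3 * s n ^ 2 * l n + 36 * s n * p n ^ 2 + 12 * s n * p n * l n + 14 * p n ^ 3) :
    ∀ n, 1 ≤ n → s n ^ 4 = (3 : ℝ) ^ (3 ^ n + 2 * n - 1) * (5 : ℝ) ^ (3 ^ n - 2 * n - 1) := by
  have key : ∀ n, 1 ≤ n →
      s n ^ 4 = (3 : ℝ) ^ (3 ^ n + 2 * n - 1) * (5 : ℝ) ^ (3 ^ n - 2 * n - 1) ∧
      (s n + 2 * p n) ^ 4 = (3 : ℝ) ^ (3 ^ n - 2 * n - 1) * (5 : ℝ) ^ (3 ^ n + 2 * n - 1) ∧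
      s n * l n = 3 * p n ^ 2 := by
    intro n hn
    induction n with
    | zero => omega
    | succ k ih =>
      rcases Nat.eq_or_lt_of_le hn with h1 | h1
      · -- k + 1 = 1
        have hk : k = 0 := by omega
        subst hk
        norm_num [hs1, hp1, hl1]
      · have hk : 1 ≤ k := by omega
        obtain ⟨h1, h2, h3⟩ := ih hk
        have hbk : 2 * k + 1 ≤ 3 ^ k := hanoi_aux_pow k
        have hbk1 : 2 * (k + 1) + 1 ≤ 3 ^ (k + 1) := hanoi_aux_pow (k + 1)
        have h3k : (3:ℕ) ^ (k + 1) = 3 * 3 ^ k := by ring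
        -- s (k+1) = 3 * s k ^ 2 * (s k + 2 * p k)
        have ks : s (k + 1) = 3 * s k ^ 2 * (s k + 2 * p k) := by
          rw [hs k hk]; ring
        -- (s+2p) (k+1) = 5 * s k * (s k + 2 p k)^2
        have kt : s (k + 1) + 2 * p (k + 1) = 5 * s k * (s k + 2 * p k) ^ 2 := by
          rw [hs k hk, hp k hk]; linear_combination 2 * s k * h3
        refine ⟨?_, ?_, ?_⟩
        · have : s (k + 1) ^ 4 = 3 ^ 4 * (s k ^ 4) ^ 2 * (s k + 2 * p k) ^ 4 := by
            rw [ks]; ring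
          rw [this, h1, h2]
          rw [show ((3:ℝ) ^ (3 ^ k + 2 * k - 1) * 5 ^ (3 ^ k - 2 * k - 1)) ^ 2
              = 3 ^ (2 * (3 ^ k + 2 * k - 1)) * 5 ^ (2 * (3 ^ k - 2 * k - 1)) by
            rw [mul_pow, ← pow_mul, ← pow_mul]; ring_nf]
          rw [show (3:ℝ) ^ (3 ^ (k+1) + 2 * (k+1) - 1)
              = 3 ^ (4 + 2 * (3 ^ k + 2 * k - 1) + (3 ^ k - 2 * k - 1)) by
            congr 1; omega]
          rw [show (5:ℝ) ^ (3 ^ (k+1) - 2 * (k+1) - 1)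
              = 5 ^ (2 * (3 ^ k - 2 * k - 1) + (3 ^ k + 2 * k - 1)) by
            congr 1; omega]
          rw [pow_add, pow_add, pow_add]
          ring
        · have : (s (k + 1) + 2 * p (k + 1)) ^ 4
              = 5 ^ 4 * s k ^ 4 * ((s k + 2 * p k) ^ 4) ^ 2 := by
            rw [kt]; ring
          rw [this, h1, h2]
          rw [show ((3:ℝ) ^ (3 ^ k - 2 * k - 1) * 5 ^ (3 ^ k + 2 * k - 1)) ^ 2
              = 3 ^ (2 * (3 ^ k - 2 * k - 1)) * 5 ^ (2 * (3 ^ k + 2 * k - 1)) by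
            rw [mul_pow, ← pow_mul, ← pow_mul]; ring_nf]
          rw [show (3:ℝ) ^ (3 ^ (k+1) - 2 * (k+1) - 1)
              = 3 ^ ((3 ^ k + 2 * k - 1) + 2 * (3 ^ k - 2 * k - 1)) by
            congr 1; omega]
          rw [show (5:ℝ) ^ (3 ^ (k+1) + 2 * (k+1) - 1)
              = 5 ^ (4 + (3 ^ k - 2 * k - 1) + 2 * (3 ^ k + 2 * k - 1)) by
            congr 1; omega]
          rw [pow_add, pow_add, pow_add]
          ring
        · rw [hs k hk, hp k hk, hl k hk]
          linear_combination (3 * s k ^ 4 + 12 * s k ^ 3 * p k + 21 * s k ^ 2 * p k ^ 2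
            - 3 * s k ^ 3 * l k) * h3
  exact fun n hn => (key n hn).1
end

section
/- Let s, p, l be the real sequences defined in the context. Then for every integer n ≥ 1, p(n) = (1/6) · ((5^n − 3^n)/5^n) · 3^((3^n − 2n + 3)/4) · 5^((3^n + 2n − 1)/4), where the powers of 3 and 5 are real powers with the indicated (possibly non-integer) exponents. -/
/-!
Write `p n = r n * s n`. If moreover `l n = 3 * r n ^ 2 * s n`, the three recurrences factor
through `1 + 2 r`: `s (n+1) = 3 (1 + 2 r) s ^ 3`, `p (n+1) = (1 + 2 r) (1 + 5 r) s ^ 3` and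
`l (n+1) = (1 + 2 r) (1 + 5 r) ^ 2 s ^ 3`, so the same shape persists with `r (n+1) = (1 + 5 r) / 3`.
From `r 1 = 1/3` this gives `r n = ((5/3)^n - 1) / 2`, hence `1 + 2 r n = (5/3)^n`, and
`s (n+1) = 3 (5/3)^n s n ^ 3` is solved by `s n = 3^n 15^(e n)` with `e n = (3^n - 2n - 1)/4`.
-/

open Real

noncomputable def hanoiRatio (n : ℕ) : ℝ := (((5 : ℝ) / 3) ^ n - 1) / 2

noncomputable def hanoiExponent (n : ℕ) : ℝ := ((3 : ℝ) ^ n - 2 * n - 1) / 4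

lemma hanoiRatio_one : hanoiRatio 1 = 1 / 3 := by norm_num [hanoiRatio]

lemma hanoiRatio_succ (n : ℕ) : hanoiRatio (n + 1) = (1 + 5 * hanoiRatio n) / 3 := by
  simp only [hanoiRatio, pow_succ]; ring

lemma one_add_two_mul_hanoiRatio (n : ℕ) : 1 + 2 * hanoiRatio n = ((5 : ℝ) / 3) ^ n := by
  simp only [hanoiRatio]; ring

lemma hanoiExponent_one : hanoiExponent 1 = 0 := by norm_num [hanoiExponent]

lemma hanoiExponent_succ (n : ℕ) : hanoiExponent (n + 1) = 3 * hanoiExponent n + n := by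
  simp only [hanoiExponent]; push_cast; ring

section Recurrence

variable {s p l : ℕ → ℝ}

lemma hanoi_ratio_invariant (hs1 : s 1 = 3) (hp1 : p 1 = 1) (hl1 : l 1 = 1)
    (hs : ∀ n, 1 ≤ n → s (n + 1) = 3 * s n ^ 3 + 6 * s n ^ 2 * p n)
    (hp : ∀ n, 1 ≤ n → p (n + 1) = s n ^ 3 + 7 * s n ^ 2 * p n + 7 * s n * p n ^ 2 + s n ^ 2 * l n)
    (hl : ∀ n, 1 ≤ n → l (n + 1) = s n ^ 3 + 12 * s n ^ 2 * p n + 3 * s n ^ 2 * l n + 36 * s n * p n ^ 2 + 12 * s n * p n * l n + 14 * p n ^ 3)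
    {n : ℕ} (hn : 1 ≤ n) :
    p n = hanoiRatio n * s n ∧ l n = 3 * hanoiRatio n ^ 2 * s n := by
  induction n, hn using Nat.le_induction with
  | base => rw [hs1, hp1, hl1, hanoiRatio_one]; norm_num
  | succ n hn ih =>
    obtain ⟨hpn, hln⟩ := ih
    rw [hs n hn, hp n hn, hl n hn, hpn, hln, hanoiRatio_succ]
    constructor <;> ring

lemma hanoi_s_succ_of_ratio (hs : ∀ n, 1 ≤ n → s (n + 1) = 3 * s n ^ 3 + 6 * s n ^ 2 * p n)
    {n : ℕ} (hn : 1 ≤ n) (hpn : p n = hanoiRatio n * s n) :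
    s (n + 1) = 3 * ((5 : ℝ) / 3) ^ n * s n ^ 3 := by
  rw [hs n hn, hpn, ← one_add_two_mul_hanoiRatio]; ring

lemma hanoi_s_eq (hs1 : s 1 = 3) (hsucc : ∀ n, 1 ≤ n → s (n + 1) = 3 * ((5 : ℝ) / 3) ^ n * s n ^ 3)
    {n : ℕ} (hn : 1 ≤ n) : s n = 3 ^ n * (15 : ℝ) ^ hanoiExponent n := by
  induction n, hn using Nat.le_induction with
  | base => rw [hs1, hanoiExponent_one]; norm_num
  | succ n hn ih =>
    have h15 : (15 : ℝ) ^ hanoiExponent (n + 1) = ((15 : ℝ) ^ hanoiExponent n) ^ 3 * (3 * 5) ^ n := by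
      rw [hanoiExponent_succ, rpow_add (by norm_num), rpow_natCast, ← rpow_natCast _ 3,
        ← rpow_mul (by norm_num)]
      norm_num [mul_comm]
    rw [hsucc n hn, ih, h15, mul_pow (3 : ℝ) 5 n, div_pow]
    field_simp
    ring

end Recurrence

lemma hanoiRatio_mul_eq_closed_form (n : ℕ) :
    hanoiRatio n * (3 ^ n * (15 : ℝ) ^ hanoiExponent n) =
      (1 / 6) * (((5 : ℝ) ^ n - (3 : ℝ) ^ n) / (5 : ℝ) ^ n) *
        (3 : ℝ) ^ (((3 : ℝ) ^ n - 2 * (n : ℝ) + 3) / 4) *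
        (5 : ℝ) ^ (((3 : ℝ) ^ n + 2 * (n : ℝ) - 1) / 4) := by
  have h3 : ((3 : ℝ) ^ n - 2 * n + 3) / 4 = hanoiExponent n + 1 := by
    simp only [hanoiExponent]; ring
  have h5 : ((3 : ℝ) ^ n + 2 * n - 1) / 4 = hanoiExponent n + n := by
    simp only [hanoiExponent]; ring
  rw [h3, h5, rpow_add (by norm_num), rpow_add (by norm_num), rpow_one, rpow_natCast,
    show (15 : ℝ) = 3 * 5 by norm_num, mul_rpow (by norm_num) (by norm_num), hanoiRatio, div_pow]
  field_simp
  ring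

theorem hanoi_stmt_3 (s p l : ℕ → ℝ)
    (hs1 : s 1 = 3) (hp1 : p 1 = 1) (hl1 : l 1 = 1)
    (hs : ∀ n, 1 ≤ n → s (n + 1) = 3 * s n ^ 3 + 6 * s n ^ 2 * p n)
    (hp : ∀ n, 1 ≤ n → p (n + 1) = s n ^ 3 + 7 * s n ^ 2 * p n + 7 * s n * p n ^ 2 + s n ^ 2 * l n)
    (hl : ∀ n, 1 ≤ n → l (n + 1) = s n ^ 3 + 12 * s n ^ 2 * p n + 3 * s n ^ 2 * l n + 36 * s n * p n ^ 2 + 12 * s n * p n * l n + 14 * p n ^ 3) :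
    ∀ n, 1 ≤ n → p n = (1 / 6) * (((5 : ℝ) ^ n - (3 : ℝ) ^ n) / (5 : ℝ) ^ n) * (3 : ℝ) ^ (((3 : ℝ) ^ n - 2 * (n : ℝ) + 3) / 4) * (5 : ℝ) ^ (((3 : ℝ) ^ n + 2 * (n : ℝ) - 1) / 4) := by
  have hratio : ∀ n, 1 ≤ n → p n = hanoiRatio n * s n := fun n hn =>
    (hanoi_ratio_invariant hs1 hp1 hl1 hs hp hl hn).1
  have hsn : ∀ n, 1 ≤ n → s n = 3 ^ n * (15 : ℝ) ^ hanoiExponent n := fun n hn =>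
    hanoi_s_eq hs1 (fun k hk => hanoi_s_succ_of_ratio hs hk (hratio k hk)) hn
  intro n hn
  rw [hratio n hn, hsn n hn, hanoiRatio_mul_eq_closed_form]
end

section
/- Let s, p, l be the real sequences defined in the context. Then for every integer n ≥ 1, l(n) = (1/4) · (5^n − 3^n)^2 · 3^((3^n − 6n + 3)/4) · 5^((3^n − 2n − 1)/4), where the powers of 3 and 5 are real powers with the indicated (possibly non-integer) exponents. -/
/-!
All three sequences carry the common factor `3 ^ e n * 5 ^ e n` with `e n = (3 ^ n - 2 n - 1) / 4`.
Since `e (n + 1) = 3 e n + n`, one step replaces this factor by its cube times `15 ^ n`, matching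
the homogeneous cubic recursion, and what remains is a polynomial identity in `3 ^ n` and `5 ^ n` between the
prefactors `3 ^ n`, `(5 ^ n - 3 ^ n) / 2` and `3 (5 ^ n - 3 ^ n) ^ 2 / (4 · 3 ^ n)`.
-/

open Real

lemma rpow_three_mul_add_natCast {b : ℝ} (hb : 0 < b) (t : ℝ) (n : ℕ) :
    b ^ (3 * t + n) = (b ^ t) ^ 3 * b ^ n := by
  rw [mul_comm 3 t, rpow_add hb, rpow_mul hb.le, rpow_natCast, rpow_ofNat]

noncomputable def hanoiFactor (n : ℕ) : ℝ := 3 ^ hanoiExponent n * 5 ^ hanoiExponent n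

lemma hanoiFactor_one : hanoiFactor 1 = 1 := by
  simp [hanoiFactor, hanoiExponent_one]

lemma hanoiFactor_succ (n : ℕ) :
    hanoiFactor (n + 1) = hanoiFactor n ^ 3 * 3 ^ n * 5 ^ n := by
  simp only [hanoiFactor, hanoiExponent_succ, rpow_three_mul_add_natCast three_pos,
    rpow_three_mul_add_natCast (by norm_num : (0 : ℝ) < 5)]
  ring

noncomputable def spanningTreeClosed (n : ℕ) : ℝ := 3 ^ n * hanoiFactor n

noncomputable def twoForestClosed (n : ℕ) : ℝ := (5 ^ n - 3 ^ n) / 2 * hanoiFactor n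

noncomputable def threeForestClosed (n : ℕ) : ℝ :=
  3 * (5 ^ n - 3 ^ n) ^ 2 / (4 * 3 ^ n) * hanoiFactor n

section Recursion

variable (n : ℕ)

local notation "S" => spanningTreeClosed
local notation "P" => twoForestClosed
local notation "L" => threeForestClosed

lemma spanningTreeClosed_succ : S (n + 1) = 3 * S n ^ 3 + 6 * S n ^ 2 * P n := by
  simp only [spanningTreeClosed, twoForestClosed, hanoiFactor_succ, pow_succ]
  ring

lemma twoForestClosed_succ :
    P (n + 1) = S n ^ 3 + 7 * S n ^ 2 * P n + 7 * S n * P n ^ 2 + S n ^ 2 * L n := by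
  simp only [spanningTreeClosed, twoForestClosed, threeForestClosed, hanoiFactor_succ, pow_succ]
  field_simp
  ring

lemma threeForestClosed_succ :
    L (n + 1) = S n ^ 3 + 12 * S n ^ 2 * P n + 3 * S n ^ 2 * L n + 36 * S n * P n ^ 2
      + 12 * S n * P n * L n + 14 * P n ^ 3 := by
  simp only [spanningTreeClosed, twoForestClosed, threeForestClosed, hanoiFactor_succ, pow_succ]
  field_simp
  ring

end Recursion

lemma threeForestClosed_eq_rpow (n : ℕ) :
    threeForestClosed n = (1 / 4) * ((5 : ℝ) ^ n - (3 : ℝ) ^ n) ^ 2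
      * (3 : ℝ) ^ (((3 : ℝ) ^ n - 6 * (n : ℝ) + 3) / 4)
      * (5 : ℝ) ^ (((3 : ℝ) ^ n - 2 * (n : ℝ) - 1) / 4) := by
  have hexp : ((3 : ℝ) ^ n - 6 * (n : ℝ) + 3) / 4 = hanoiExponent n + 1 - n := by
    unfold hanoiExponent; ring
  rw [hexp, rpow_sub three_pos, rpow_add three_pos, rpow_one, rpow_natCast]
  simp only [threeForestClosed, hanoiFactor, hanoiExponent]
  field_simp

theorem hanoi_stmt_4 (s p l : ℕ → ℝ)
    (hs1 : s 1 = 3) (hp1 : p 1 = 1) (hl1 : l 1 = 1)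
    (hs : ∀ n, 1 ≤ n → s (n + 1) = 3 * s n ^ 3 + 6 * s n ^ 2 * p n)
    (hp : ∀ n, 1 ≤ n → p (n + 1) = s n ^ 3 + 7 * s n ^ 2 * p n + 7 * s n * p n ^ 2 + s n ^ 2 * l n)
    (hl : ∀ n, 1 ≤ n → l (n + 1) = s n ^ 3 + 12 * s n ^ 2 * p n + 3 * s n ^ 2 * l n + 36 * s n * p n ^ 2 + 12 * s n * p n * l n + 14 * p n ^ 3) :
    ∀ n, 1 ≤ n → l n = (1 / 4) * ((5 : ℝ) ^ n - (3 : ℝ) ^ n) ^ 2 * (3 : ℝ) ^ (((3 : ℝ) ^ n - 6 * (n : ℝ) + 3) / 4) * (5 : ℝ) ^ (((3 : ℝ) ^ n - 2 * (n : ℝ) - 1) / 4) := by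
  intro n hn
  rw [← threeForestClosed_eq_rpow]
  have hclosed : ∀ n, 1 ≤ n →
      s n = spanningTreeClosed n ∧ p n = twoForestClosed n ∧ l n = threeForestClosed n := by
    intro n hn
    induction n, hn using Nat.le_induction with
    | base =>
      norm_num [spanningTreeClosed, twoForestClosed, threeForestClosed, hanoiFactor_one, hs1, hp1, hl1]
    | succ m hm ih =>
      obtain ⟨hsm, hpm, hlm⟩ := ih
      refine ⟨?_, ?_, ?_⟩
      · rw [hs m hm, spanningTreeClosed_succ, hsm, hpm]
      · rw [hp m hm, twoForestClosed_succ, hsm, hpm, hlm]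
      · rw [hl m hm, threeForestClosed_succ, hsm, hpm, hlm]
  exact (hclosed n hn).2.2
end

section
/- Let s, p, l and the families A_i, B_i, C_i, D_i be the real sequences defined in the context. Then for every integer n ≥ 1, C_0(n) = (5·(15^n − 1)/(7·5^n·(5^n − 3^n))) · p(n); that is, the probability P_{n,0}(2) that vertex 0 has degree 0 in a uniformly random two-tree spanning forest of type P of H_n (the type in which the outmost vertex 2 lies in one component tree and the outmost vertices 0 and 1 lie in the other) equals 5·(15^n − 1)/(7·5^n·(5^n − 3^n)). -/
set_option maxHeartbeats 1600000 in
theorem hanoi_stmt_10 (s p l : ℕ → ℝ)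
    (hs1 : s 1 = 3) (hp1 : p 1 = 1) (hl1 : l 1 = 1)
    (hs : ∀ n, 1 ≤ n → s (n + 1) = 3 * s n ^ 3 + 6 * s n ^ 2 * p n)
    (hp : ∀ n, 1 ≤ n → p (n + 1) = s n ^ 3 + 7 * s n ^ 2 * p n + 7 * s n * p n ^ 2 + s n ^ 2 * l n)
    (hl : ∀ n, 1 ≤ n → l (n + 1) = s n ^ 3 + 12 * s n ^ 2 * p n + 3 * s n ^ 2 * l n + 36 * s n * p n ^ 2 + 12 * s n * p n * l n + 14 * p n ^ 3)
    (A B C D : ℕ → ℕ → ℝ)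
    (hA11 : A 1 1 = 2) (hA21 : A 2 1 = 1)
    (hA01 : ∀ i, i ≠ 1 → i ≠ 2 → A i 1 = 0)
    (hB11 : B 1 1 = 1) (hB01 : ∀ i, i ≠ 1 → B i 1 = 0)
    (hC01 : C 0 1 = 1) (hC01' : ∀ i, i ≠ 0 → C i 1 = 0)
    (hD01 : D 0 1 = 1) (hD01' : ∀ i, i ≠ 0 → D i 1 = 0)
    (hA : ∀ i n, 1 ≤ n → A i (n + 1) = 3 * A i n * s n ^ 2 + 2 * B i n * s n ^ 2 + 4 * A i n * s n * p n)
    (hB : ∀ i n, 1 ≤ n → B i (n + 1) = A i n * s n ^ 2 + B i n * s n ^ 2 + 6 * A i n * s n * p n + 4 * B i n * s n * p n + 3 * A i n * p n ^ 2 + A i n * p n * l n)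
    (hC : ∀ i n, 1 ≤ n → C i (n + 1) = A i n * s n ^ 2 + 2 * B i n * s n ^ 2 + 3 * C i n * s n ^ 2 + D i n * s n ^ 2 + 2 * A i n * s n * p n + 2 * B i n * s n * p n + 4 * C i n * s n * p n + A i n * p n ^ 2)
    (hD : ∀ i n, 1 ≤ n → D i (n + 1) = A i n * s n ^ 2 + 2 * B i n * s n ^ 2 + 2 * C i n * s n ^ 2 + D i n * s n ^ 2 + 8 * A i n * s n * p n + 12 * B i n * s n * p n + 12 * C i n * s n * p n + 4 * D i n * s n * p n + 12 * A i n * p n ^ 2 + 8 * B i n * p n ^ 2 + 6 * C i n * p n ^ 2 + 2 * A i n * s n * l n + 2 * B i n * s n * l n + 2 * C i n * s n * l n + 4 * A i n * p n * l n) :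
    ∀ n, 1 ≤ n → C 0 n = (5 * ((15 : ℝ) ^ n - 1) / (7 * (5 : ℝ) ^ n * ((5 : ℝ) ^ n - (3 : ℝ) ^ n))) * p n := by
  suffices h : ∀ n, 1 ≤ n → 0 < s n ∧ 0 < p n ∧
      2 * (3:ℝ)^n * p n = ((5:ℝ)^n - (3:ℝ)^n) * s n ∧
      s n * l n = 3 * p n ^ 2 ∧ A 0 n = 0 ∧ B 0 n = 0 ∧
      C 0 n = (5 * ((15 : ℝ) ^ n - 1) / (7 * (5 : ℝ) ^ n * ((5 : ℝ) ^ n - (3 : ℝ) ^ n))) * p n ∧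
      D 0 n = ((5 * (75:ℝ)^n - 5 * (45:ℝ)^n + 9 * (5:ℝ)^n + 5 * (3:ℝ)^n) /
        (7 * (15:ℝ)^n * ((5:ℝ)^n - (3:ℝ)^n))) * p n by
    intro n hn
    exact (h n hn).2.2.2.2.2.2.1
  intro n hn
  induction n, hn using Nat.le_induction with
  | base =>
    refine ⟨by rw [hs1]; norm_num, by rw [hp1]; norm_num, ?_, ?_, ?_, ?_, ?_, ?_⟩
    · rw [hs1, hp1]; norm_num
    · rw [hs1, hl1, hp1]; norm_num
    · exact hA01 0 (by norm_num) (by norm_num)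
    · exact hB01 0 (by norm_num)
    · rw [hC01, hp1]; norm_num
    · rw [hD01, hp1]; norm_num
  | succ n hn ih =>
    obtain ⟨hspos, hppos, h1, h2, hA0, hB0, hC0, hD0⟩ := ih
    have hsne : s n ≠ 0 := ne_of_gt hspos
    have hpne : p n ≠ 0 := ne_of_gt hppos
    set x := (3:ℝ)^n with hxdef
    set y := (5:ℝ)^n with hydef
    have h15 : (15:ℝ)^n = x * y := by rw [hxdef, hydef, ← mul_pow]; norm_num
    have h45 : (45:ℝ)^n = x * x * y := by rw [hxdef, hydef, ← mul_pow, ← mul_pow]; norm_num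
    have h75 : (75:ℝ)^n = x * y * y := by rw [hxdef, hydef, ← mul_pow, ← mul_pow]; norm_num
    have hx : (0:ℝ) < x := by rw [hxdef]; positivity
    have hy : (0:ℝ) < y := by rw [hydef]; positivity
    have hxy : x < y := by
      rw [hxdef, hydef]
      exact pow_lt_pow_left₀ (by norm_num) (by norm_num) (by omega)
    clear_value x y
    have hxne : x ≠ 0 := ne_of_gt hx
    have hyne : y ≠ 0 := ne_of_gt hy
    have hdne : y - x ≠ 0 := by intro h; nlinarith
    have h53ne : y * 5 - x * 3 ≠ 0 := by nlinarith
    have h53ne' : 5 * y - 3 * x ≠ 0 := by nlinarith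
    -- express s n and l n in terms of p n
    have hsval : s n = 2 * x * p n / (y - x) := by
      field_simp
      linarith [h1]
    have hlval : l n = 3 * (y - x) * p n / (2 * x) := by
      have key : p n * (l n * (2 * x)) = p n * (3 * (y - x) * p n) := by
        have h2' : (2 * x * p n / (y - x)) * l n = 3 * p n ^ 2 := by rw [← hsval]; exact h2
        field_simp at h2'
        nlinarith [h2']
      have := mul_left_cancel₀ hpne key
      field_simp
      linarith [this]
    have hlpos : 0 < l n := by rw [hlval]; have : (0:ℝ) < y - x := by linarith
                               positivity
    have hppos' : 0 < p (n+1) := by rw [hp n hn]; positivity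
    refine ⟨?_, hppos', ?_, ?_, ?_, ?_, ?_, ?_⟩
    · rw [hs n hn]; positivity
    · rw [hp n hn, hs n hn, hsval, hlval]
      simp only [pow_succ, ← hxdef, ← hydef]
      field_simp
      ring
    · rw [hs n hn, hl n hn, hp n hn, hsval, hlval]
      field_simp
      ring
    · rw [hA 0 n hn, hA0, hB0]; ring
    · rw [hB 0 n hn, hA0, hB0]; ring
    · rw [hC 0 n hn, hA0, hB0, hC0, hD0, hp n hn, hsval, hlval]
      simp only [pow_succ, h15, h45, h75, ← hxdef, ← hydef]
      field_simp
      ring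
    · rw [hD 0 n hn, hA0, hB0, hC0, hD0, hp n hn, hsval, hlval]
      simp only [pow_succ, h15, h45, h75, ← hxdef, ← hydef]
      field_simp
      ring
end

section
/- Let s, p, l and the families A_i, B_i, C_i, D_i be the real sequences defined in the context. Then for every integer n ≥ 1, D_0(n) = (10·3^n/(21·(5^n − 3^n)) + (18·5^n + 10·3^n)/(21·5^n·(5^n − 3^n)^2)) · l(n); that is, the probability L_{n,0}(0) that vertex 0 has degree 0 in a uniformly random three-tree spanning forest of H_n equals 10·3^n/(21·(5^n − 3^n)) + (18·5^n + 10·3^n)/(21·5^n·(5^n − 3^n)^2). -/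
/-!
With `t = 3^n` and `w = 5^n`, the ratio `x = p(n)/s(n)` equals `(5^n - 3^n)/(2·3^n)` and
`l(n)/s(n) = 3x²`: the recurrences factor as `s' = 3(1+2x)s³`, `p' = (1+2x)(1+5x)s³`,
`l' = (1+2x)(1+5x)²s³`, so `x' = (1+5x)/3`. The degree-`0` slices `A_0, B_0` vanish
identically, after which `C_0/s` and `D_0/l` are rational functions of `t, w` whose
induction steps are single rational identities.
-/

/- At `t = 3^n`, `w = 5^n` these are `p(n)/s(n)`, `C_0(n)/s(n)` and `D_0(n)/l(n)`. -/
noncomputable def psRatio (t w : ℝ) : ℝ := (w - t) / (2 * t)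

noncomputable def csRatio (t w : ℝ) : ℝ := 5 * (t * w - 1) / (14 * t * w)

noncomputable def dlRatio (t w : ℝ) : ℝ :=
  10 * t / (21 * (w - t)) + (18 * w + 10 * t) / (21 * w * (w - t) ^ 2)

lemma psRatio_pow_succ (n : ℕ) :
    psRatio (3 ^ (n + 1)) (5 ^ (n + 1)) = (1 + 5 * psRatio (3 ^ n) (5 ^ n)) / 3 := by
  unfold psRatio
  rw [pow_succ' (3 : ℝ), pow_succ' (5 : ℝ)]
  field_simp
  ring

section Identities

variable {t w : ℝ}

lemma csRatio_succ (ht : 0 < t) (htw : t < w) :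
    csRatio (3 * t) (5 * w) * (3 + 6 * psRatio t w) =
      3 * csRatio t w + 3 * dlRatio t w * psRatio t w ^ 2 + 4 * csRatio t w * psRatio t w := by
  have hw : 0 < w := ht.trans htw
  have hwt : w - t ≠ 0 := sub_ne_zero.mpr htw.ne'
  unfold csRatio dlRatio psRatio
  field_simp
  ring

lemma dlRatio_succ (ht : 0 < t) (htw : t < w) :
    dlRatio (3 * t) (5 * w) * ((1 + 5 * psRatio t w) ^ 2 * (1 + 2 * psRatio t w)) =
      2 * csRatio t w + 3 * dlRatio t w * psRatio t w ^ 2 + 12 * csRatio t w * psRatio t w +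
        12 * dlRatio t w * psRatio t w ^ 3 + 12 * csRatio t w * psRatio t w ^ 2 := by
  have hw : 0 < w := ht.trans htw
  have hwt : w - t ≠ 0 := sub_ne_zero.mpr htw.ne'
  have hwt' : 5 * w - 3 * t ≠ 0 := by linarith
  unfold csRatio dlRatio psRatio
  field_simp
  ring

end Identities

section Recurrences

variable {s p l : ℕ → ℝ}

theorem hanoi_p_l_eq (hs1 : s 1 = 3) (hp1 : p 1 = 1) (hl1 : l 1 = 1)
    (hs : ∀ n, 1 ≤ n → s (n + 1) = 3 * s n ^ 3 + 6 * s n ^ 2 * p n)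
    (hp : ∀ n, 1 ≤ n → p (n + 1) = s n ^ 3 + 7 * s n ^ 2 * p n + 7 * s n * p n ^ 2 + s n ^ 2 * l n)
    (hl : ∀ n, 1 ≤ n → l (n + 1) = s n ^ 3 + 12 * s n ^ 2 * p n + 3 * s n ^ 2 * l n + 36 * s n * p n ^ 2 + 12 * s n * p n * l n + 14 * p n ^ 3) :
    ∀ n, 1 ≤ n → p n = psRatio (3 ^ n) (5 ^ n) * s n ∧
      l n = 3 * psRatio (3 ^ n) (5 ^ n) ^ 2 * s n := by
  intro n hn
  induction n, hn using Nat.le_induction with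
  | base => simp only [hs1, hp1, hl1, psRatio]; norm_num
  | succ n hn ih =>
    obtain ⟨hpn, hln⟩ := ih
    rw [psRatio_pow_succ, hs n hn, hp n hn, hl n hn, hpn, hln]
    constructor <;> ring

theorem hanoi_slice_eq_zero {a b : ℕ → ℝ} (ha1 : a 1 = 0) (hb1 : b 1 = 0)
    (ha : ∀ n, 1 ≤ n → a (n + 1) = 3 * a n * s n ^ 2 + 2 * b n * s n ^ 2 + 4 * a n * s n * p n)
    (hb : ∀ n, 1 ≤ n → b (n + 1) = a n * s n ^ 2 + b n * s n ^ 2 + 6 * a n * s n * p n + 4 * b n * s n * p n + 3 * a n * p n ^ 2 + a n * p n * l n) :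
    ∀ n, 1 ≤ n → a n = 0 ∧ b n = 0 := by
  intro n hn
  induction n, hn using Nat.le_induction with
  | base => exact ⟨ha1, hb1⟩
  | succ n hn ih =>
    rw [ha n hn, hb n hn, ih.1, ih.2]
    constructor <;> ring

theorem hanoi_c_d_eq {c d : ℕ → ℝ} (hs1 : s 1 = 3) (hl1 : l 1 = 1) (hc1 : c 1 = 1) (hd1 : d 1 = 1)
    (hs : ∀ n, 1 ≤ n → s (n + 1) = 3 * s n ^ 3 + 6 * s n ^ 2 * p n)
    (hpl : ∀ n, 1 ≤ n → p n = psRatio (3 ^ n) (5 ^ n) * s n ∧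
      l n = 3 * psRatio (3 ^ n) (5 ^ n) ^ 2 * s n)
    (hc : ∀ n, 1 ≤ n → c (n + 1) = 3 * c n * s n ^ 2 + d n * s n ^ 2 + 4 * c n * s n * p n)
    (hd : ∀ n, 1 ≤ n → d (n + 1) = 2 * c n * s n ^ 2 + d n * s n ^ 2 + 12 * c n * s n * p n + 4 * d n * s n * p n + 6 * c n * p n ^ 2 + 2 * c n * s n * l n) :
    ∀ n, 1 ≤ n → c n = csRatio (3 ^ n) (5 ^ n) * s n ∧ d n = dlRatio (3 ^ n) (5 ^ n) * l n := by
  intro n hn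
  induction n, hn using Nat.le_induction with
  | base => simp only [hs1, hl1, hc1, hd1, csRatio, dlRatio]; norm_num
  | succ n hn ih =>
    obtain ⟨hcn, hdn⟩ := ih
    obtain ⟨hpn, hln⟩ := hpl n hn
    have ht : (0 : ℝ) < 3 ^ n := by positivity
    have htw : (3 : ℝ) ^ n < 5 ^ n := pow_lt_pow_left₀ (by norm_num) (by norm_num) (by omega)
    rw [(hpl (n + 1) (by omega)).2, psRatio_pow_succ, hc n hn, hd n hn, hs n hn, hcn, hdn, hpn, hln,
      pow_succ' (3 : ℝ), pow_succ' (5 : ℝ)]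
    constructor
    · linear_combination (-s n ^ 3) * csRatio_succ ht htw
    · linear_combination (-s n ^ 3) * dlRatio_succ ht htw

end Recurrences

theorem hanoi_stmt_13_general (s p l : ℕ → ℝ)
    (hs1 : s 1 = 3) (hp1 : p 1 = 1) (hl1 : l 1 = 1)
    (hs : ∀ n, 1 ≤ n → s (n + 1) = 3 * s n ^ 3 + 6 * s n ^ 2 * p n)
    (hp : ∀ n, 1 ≤ n → p (n + 1) = s n ^ 3 + 7 * s n ^ 2 * p n + 7 * s n * p n ^ 2 + s n ^ 2 * l n)
    (hl : ∀ n, 1 ≤ n → l (n + 1) = s n ^ 3 + 12 * s n ^ 2 * p n + 3 * s n ^ 2 * l n + 36 * s n * p n ^ 2 + 12 * s n * p n * l n + 14 * p n ^ 3)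
    (A B C D : ℕ → ℕ → ℝ)
    (hA01 : ∀ i, i ≠ 1 → i ≠ 2 → A i 1 = 0)
    (hB01 : ∀ i, i ≠ 1 → B i 1 = 0)
    (hC01 : C 0 1 = 1)
    (hD01 : D 0 1 = 1)
    (hA : ∀ i n, 1 ≤ n → A i (n + 1) = 3 * A i n * s n ^ 2 + 2 * B i n * s n ^ 2 + 4 * A i n * s n * p n)
    (hB : ∀ i n, 1 ≤ n → B i (n + 1) = A i n * s n ^ 2 + B i n * s n ^ 2 + 6 * A i n * s n * p n + 4 * B i n * s n * p n + 3 * A i n * p n ^ 2 + A i n * p n * l n)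
    (hC : ∀ i n, 1 ≤ n → C i (n + 1) = A i n * s n ^ 2 + 2 * B i n * s n ^ 2 + 3 * C i n * s n ^ 2 + D i n * s n ^ 2 + 2 * A i n * s n * p n + 2 * B i n * s n * p n + 4 * C i n * s n * p n + A i n * p n ^ 2)
    (hD : ∀ i n, 1 ≤ n → D i (n + 1) = A i n * s n ^ 2 + 2 * B i n * s n ^ 2 + 2 * C i n * s n ^ 2 + D i n * s n ^ 2 + 8 * A i n * s n * p n + 12 * B i n * s n * p n + 12 * C i n * s n * p n + 4 * D i n * s n * p n + 12 * A i n * p n ^ 2 + 8 * B i n * p n ^ 2 + 6 * C i n * p n ^ 2 + 2 * A i n * s n * l n + 2 * B i n * s n * l n + 2 * C i n * s n * l n + 4 * A i n * p n * l n) :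
    ∀ n, 1 ≤ n → D 0 n = (10 * (3 : ℝ) ^ n / (21 * ((5 : ℝ) ^ n - (3 : ℝ) ^ n)) + (18 * (5 : ℝ) ^ n + 10 * (3 : ℝ) ^ n) / (21 * (5 : ℝ) ^ n * ((5 : ℝ) ^ n - (3 : ℝ) ^ n) ^ 2)) * l n := by
  have hpl := hanoi_p_l_eq hs1 hp1 hl1 hs hp hl
  have hAB := hanoi_slice_eq_zero (hA01 0 (by decide) (by decide)) (hB01 0 (by decide))
    (hA 0) (hB 0)
  have hCD := hanoi_c_d_eq (c := C 0) (d := D 0) hs1 hl1 hC01 hD01 hs hpl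
    (fun n hn => by rw [hC 0 n hn, (hAB n hn).1, (hAB n hn).2]; ring)
    (fun n hn => by rw [hD 0 n hn, (hAB n hn).1, (hAB n hn).2]; ring)
  exact fun n hn => (hCD n hn).2

theorem hanoi_stmt_13 (s p l : ℕ → ℝ)
    (hs1 : s 1 = 3) (hp1 : p 1 = 1) (hl1 : l 1 = 1)
    (hs : ∀ n, 1 ≤ n → s (n + 1) = 3 * s n ^ 3 + 6 * s n ^ 2 * p n)
    (hp : ∀ n, 1 ≤ n → p (n + 1) = s n ^ 3 + 7 * s n ^ 2 * p n + 7 * s n * p n ^ 2 + s n ^ 2 * l n)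
    (hl : ∀ n, 1 ≤ n → l (n + 1) = s n ^ 3 + 12 * s n ^ 2 * p n + 3 * s n ^ 2 * l n + 36 * s n * p n ^ 2 + 12 * s n * p n * l n + 14 * p n ^ 3)
    (A B C D : ℕ → ℕ → ℝ)
    (hA11 : A 1 1 = 2) (hA21 : A 2 1 = 1)
    (hA01 : ∀ i, i ≠ 1 → i ≠ 2 → A i 1 = 0)
    (hB11 : B 1 1 = 1) (hB01 : ∀ i, i ≠ 1 → B i 1 = 0)
    (hC01 : C 0 1 = 1) (hC01' : ∀ i, i ≠ 0 → C i 1 = 0)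
    (hD01 : D 0 1 = 1) (hD01' : ∀ i, i ≠ 0 → D i 1 = 0)
    (hA : ∀ i n, 1 ≤ n → A i (n + 1) = 3 * A i n * s n ^ 2 + 2 * B i n * s n ^ 2 + 4 * A i n * s n * p n)
    (hB : ∀ i n, 1 ≤ n → B i (n + 1) = A i n * s n ^ 2 + B i n * s n ^ 2 + 6 * A i n * s n * p n + 4 * B i n * s n * p n + 3 * A i n * p n ^ 2 + A i n * p n * l n)
    (hC : ∀ i n, 1 ≤ n → C i (n + 1) = A i n * s n ^ 2 + 2 * B i n * s n ^ 2 + 3 * C i n * s n ^ 2 + D i n * s n ^ 2 + 2 * A i n * s n * p n + 2 * B i n * s n * p n + 4 * C i n * s n * p n + A i n * p n ^ 2)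
    (hD : ∀ i n, 1 ≤ n → D i (n + 1) = A i n * s n ^ 2 + 2 * B i n * s n ^ 2 + 2 * C i n * s n ^ 2 + D i n * s n ^ 2 + 8 * A i n * s n * p n + 12 * B i n * s n * p n + 12 * C i n * s n * p n + 4 * D i n * s n * p n + 12 * A i n * p n ^ 2 + 8 * B i n * p n ^ 2 + 6 * C i n * p n ^ 2 + 2 * A i n * s n * l n + 2 * B i n * s n * l n + 2 * C i n * s n * l n + 4 * A i n * p n * l n) :
    ∀ n, 1 ≤ n → D 0 n = (10 * (3 : ℝ) ^ n / (21 * ((5 : ℝ) ^ n - (3 : ℝ) ^ n)) + (18 * (5 : ℝ) ^ n + 10 * (3 : ℝ) ^ n) / (21 * (5 : ℝ) ^ n * ((5 : ℝ) ^ n - (3 : ℝ) ^ n) ^ 2)) * l n :=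
  hanoi_stmt_13_general s p l hs1 hp1 hl1 hs hp hl A B C D hA01 hB01 hC01 hD01 hA hB hC hD
end
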